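/- arXiv:0811.4685 — 4 statements merged into one kernel-verified Lean document; each statement's English description precedes it below -/
import Mathlib

section
/- Let $K \subseteq [0,1]^{\Gamma}$ be compact in the pointwise topology and closed under pointwise minimum (i.e. $x \wedge y \in K$ whenever $x,y \in K$). Suppose $\rho : K \to [0,1]$ is lower semicontinuous with respect to the pointwise topology and satisfies: whenever $y < x$ (pointwise, with $y \neq x$), there exist $\alpha < \rho(x)$ and an open set $U \ni y$ such that $\rho(z) < \alpha$ for all $z \in U$ with $z \leq x$. Then $K$ is fragmentable. -/
open Set

/-- Lemma 2.1(I): a pointwise-compact, inf-closed subset of `[0,1]^Γ` carrying a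
lower semicontinuous `ρ` with property (*) is fragmentable. -/
theorem stmt0 {Γ : Type*} (K : Set (Γ → ℝ))
    (hK01 : ∀ x ∈ K, ∀ γ, x γ ∈ Icc (0:ℝ) 1)
    (hKcomp : IsCompact K)
    (hKinf : ∀ x ∈ K, ∀ y ∈ K, x ⊓ y ∈ K)
    (ρ : (Γ → ℝ) → ℝ)
    (hρ01 : ∀ x ∈ K, ρ x ∈ Icc (0:ℝ) 1)
    (hρlsc : LowerSemicontinuousOn ρ K)
    (hstar : ∀ x ∈ K, ∀ y ∈ K, y < x →
      ∃ α < ρ x, ∃ U : Set (Γ → ℝ), IsOpen U ∧ y ∈ U ∧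
        ∀ z ∈ K, z ∈ U → z ≤ x → ρ z < α) :
    ∃ d : (Γ → ℝ) → (Γ → ℝ) → ℝ,
      (∀ x ∈ K, ∀ y ∈ K, 0 ≤ d x y) ∧
      (∀ x ∈ K, ∀ y ∈ K, d x y = 0 → x = y) ∧
      (∀ E ⊆ K, E.Nonempty → ∀ ε > 0, ∃ U : Set (Γ → ℝ), IsOpen U ∧
        (E ∩ U).Nonempty ∧ ∀ x ∈ E ∩ U, ∀ y ∈ E ∩ U, d x y ≤ ε) := by
  -- strict monotonicity of ρ on K
  have hmono : ∀ x ∈ K, ∀ y ∈ K, y < x → ρ y < ρ x := by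
    intro x hx y hy hyx
    obtain ⟨α, hα, U, hU, hyU, hall⟩ := hstar x hx y hy hyx
    exact lt_trans (hall y hy hyU hyx.le) hα
  -- ρ(x ⊓ y) ≤ ρ x and ρ(x ⊓ y) ≤ ρ y, with equality forcing x ⊓ y = x (resp. y)
  have hinfle : ∀ x ∈ K, ∀ y ∈ K, ρ (x ⊓ y) ≤ ρ x := by
    intro x hx y hy
    rcases eq_or_lt_of_le (inf_le_left : x ⊓ y ≤ x) with h | h
    · rw [h]
    · exact (hmono x hx _ (hKinf x hx y hy) h).le
  refine ⟨fun x y => ρ x + ρ y - 2 * ρ (x ⊓ y), ?_, ?_, ?_⟩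
  · intro x hx y hy
    have h1 := hinfle x hx y hy
    have h2 := hinfle y hy x hx
    rw [inf_comm] at h2
    show (0:ℝ) ≤ ρ x + ρ y - 2 * ρ (x ⊓ y)
    linarith
  · intro x hx y hy h
    have h1 := hinfle x hx y hy
    have h2 := hinfle y hy x hx
    rw [inf_comm] at h2
    have h' : ρ x + ρ y - 2 * ρ (x ⊓ y) = 0 := h
    have e1 : ρ (x ⊓ y) = ρ x := by linarith [hmono x hx _ (hKinf x hx y hy)]
    have e2 : ρ (x ⊓ y) = ρ y := by linarith
    have hx' : x ⊓ y = x := by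
      rcases eq_or_lt_of_le (inf_le_left : x ⊓ y ≤ x) with h' | h'
      · exact h'
      · exact absurd e1 (ne_of_lt (hmono x hx _ (hKinf x hx y hy) h'))
    have hy' : x ⊓ y = y := by
      rcases eq_or_lt_of_le (inf_le_right : x ⊓ y ≤ y) with h' | h'
      · exact h'
      · exact absurd e2 (ne_of_lt (hmono y hy _ (hKinf x hx y hy) h'))
    rw [← hx', hy']
  · intro E hEK hE ε hε
    -- s = sup ρ(E)
    set s : ℝ := sSup (ρ '' E) with hs
    have hbdd : BddAbove (ρ '' E) := by
      refine ⟨1, ?_⟩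
      rintro a ⟨x, hx, rfl⟩
      exact (hρ01 x (hEK hx)).2
    have hne : (ρ '' E).Nonempty := hE.image ρ
    -- pick x₁ ∈ E with ρ x₁ > s - ε/4
    have hlt : s - ε / 4 < s := by linarith
    obtain ⟨a, ⟨x₁, hx₁E, rfl⟩, hax⟩ := exists_lt_of_lt_csSup hne hlt
    have hx₁K : x₁ ∈ K := hEK hx₁E
    -- lower semicontinuity at x₁: a neighborhood V where ρ > ρ x₁ - ε/4 on K
    have hlsc := hρlsc x₁ hx₁K (ρ x₁ - ε / 4) (by linarith)
    rw [eventually_nhdsWithin_iff] at hlsc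
    obtain ⟨V, hVsub, hVopen, hx₁V⟩ := mem_nhds_iff.mp hlsc
    -- continuity of ⊓ : shrink to W with W ⊓ W ⊆ V
    have hcont : Continuous fun p : (Γ → ℝ) × (Γ → ℝ) => p.1 ⊓ p.2 :=
      continuous_pi fun γ =>
      ((continuous_apply γ).comp continuous_fst).min ((continuous_apply γ).comp continuous_snd)
    have hpre : IsOpen ((fun p : (Γ → ℝ) × (Γ → ℝ) => p.1 ⊓ p.2) ⁻¹' V) :=
      hVopen.preimage hcont
    have hmem : (x₁, x₁) ∈ (fun p : (Γ → ℝ) × (Γ → ℝ) => p.1 ⊓ p.2) ⁻¹' V := by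
      simp [hx₁V]
    obtain ⟨W₁, W₂, hW₁, hW₂, hx₁W₁, hx₁W₂, hWsub⟩ :=
      isOpen_prod_iff.mp hpre x₁ x₁ hmem
    refine ⟨W₁ ∩ W₂, hW₁.inter hW₂, ⟨x₁, hx₁E, hx₁W₁, hx₁W₂⟩, ?_⟩
    rintro x ⟨hxE, hxW₁, hxW₂⟩ y ⟨hyE, hyW₁, hyW₂⟩
    have hxK : x ∈ K := hEK hxE
    have hyK : y ∈ K := hEK hyE
    have hxyV : x ⊓ y ∈ V := hWsub (Set.mk_mem_prod hxW₁ hyW₂)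
    have hxyK : x ⊓ y ∈ K := hKinf x hxK y hyK
    have h1 : ρ x₁ - ε / 4 < ρ (x ⊓ y) := hVsub hxyV hxyK
    have h2 : ρ x ≤ s := le_csSup hbdd ⟨x, hxE, rfl⟩
    have h3 : ρ y ≤ s := le_csSup hbdd ⟨y, hyE, rfl⟩
    show ρ x + ρ y - 2 * ρ (x ⊓ y) ≤ ε
    linarith
end

section
/- Let $T$ be a pseudotree (a partially ordered set in which every set $I_x = \{w : w < x\}$ is totally ordered). If there exists a strictly increasing map $\rho : K_{\mathscr{A}_T} \to [0,1]$, where $\mathscr{A}_T$ is the adequate family of totally ordered subsets of $T$ and $K_{\mathscr{A}_T} = \{\chi_A : A \in \mathscr{A}_T\}$ is ordered by inclusion of the underlying sets, then $T$ is special, i.e., $T$ is a countable union of antichains. -/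
open Set

/-- If the compact space of characteristic functions of chains of a pseudotree
admits a strictly increasing map into `[0,1]`, then the pseudotree is special. -/
theorem stmt4 {T : Type*} [PartialOrder T]
    (hps : ∀ x : T, IsChain (· ≤ ·) {w : T | w < x})
    (ρ : (T → ℝ) → ℝ)
    (hρ01 : ∀ A : Set T, IsChain (· ≤ ·) A → ρ (A.indicator 1) ∈ Icc (0:ℝ) 1)
    (hmono : ∀ A B : Set T, IsChain (· ≤ ·) A → IsChain (· ≤ ·) B → B ⊂ A →
      ρ (B.indicator 1) < ρ (A.indicator 1)) :
    ∃ 𝒜 : ℕ → Set T, (∀ n, IsAntichain (· ≤ ·) (𝒜 n)) ∧ (⋃ n, 𝒜 n) = Set.univ := by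
  classical
  set I : T → Set T := fun x => {w : T | w < x} with hI
  have hchain' : ∀ x : T, IsChain (· ≤ ·) (I x ∪ {x}) := by
    intro x a ha b hb hab
    rcases ha with ha | ha <;> rcases hb with hb | hb
    · exact hps x ha hb hab
    · simp only [mem_singleton_iff] at hb; subst hb; exact Or.inl ha.le
    · simp only [mem_singleton_iff] at ha; subst ha; exact Or.inr hb.le
    · simp only [mem_singleton_iff] at ha hb; subst ha hb; exact Or.inl le_rfl
  have hssub : ∀ x : T, I x ⊂ I x ∪ {x} := by
    intro x
    constructor
    · exact subset_union_left
    · intro h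
      have : x ∈ I x := h (Or.inr rfl)
      exact lt_irrefl x this
  have hlt : ∀ x : T, ρ ((I x).indicator 1) < ρ ((I x ∪ {x}).indicator 1) :=
    fun x => hmono _ _ (hchain' x) (hps x) (hssub x)
  have hq : ∀ x : T, ∃ q : ℚ, ρ ((I x).indicator 1) < (q : ℝ) ∧
      (q : ℝ) < ρ ((I x ∪ {x}).indicator 1) := fun x => exists_rat_btwn (hlt x)
  choose q hq1 hq2 using hq
  -- key: if x < y then q x < q y
  have key : ∀ x y : T, x < y → q x < q y := by
    intro x y hxy
    have hsub : I x ∪ {x} ⊆ I y := by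
      intro a ha
      rcases ha with ha | ha
      · exact lt_trans ha hxy
      · simp only [mem_singleton_iff] at ha; subst ha; exact hxy
    have h1 : ρ ((I x ∪ {x}).indicator 1) ≤ ρ ((I y).indicator 1) := by
      rcases eq_or_ssubset_of_subset hsub with h | h
      · rw [h]
      · exact (hmono _ _ (hps y) (hchain' x) h).le
    have : (q x : ℝ) < (q y : ℝ) :=
      lt_trans (lt_of_lt_of_le (hq2 x) h1) (hq1 y)
    exact_mod_cast this
  obtain ⟨e⟩ : Nonempty (ℚ ≃ ℕ) := ⟨(Denumerable.eqv ℚ).trans (Equiv.refl ℕ)⟩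
  refine ⟨fun n => {x : T | e (q x) = n}, ?_, ?_⟩
  · intro n x hx y hy hne hle
    rcases lt_or_eq_of_le hle with hlt' | hlt'
    · exact absurd (e.injective (hx.trans hy.symm)) (ne_of_lt (key x y hlt'))
    · exact hne hlt'
  · ext x
    simp only [mem_iUnion, mem_setOf_eq, mem_univ, iff_true]
    exact ⟨e (q x), rfl⟩
end

section
/- Let $\mathscr{A}$ be an adequate family on $\Gamma$ and suppose there exists a strictly increasing map $\rho : K_{\mathscr{A}} \to [0,1]$, i.e., $\rho(\chi_B) < \rho(\chi_A)$ whenever $B \subsetneq A$ with $A, B \in \mathscr{A}$. Then every member of $\mathscr{A}$ is countable. Consequently, $\mathscr{A}$ does not contain any uncountable set. -/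
open Set

/-- If an adequate family `𝒜` carries a strictly increasing map
`ρ : K_𝒜 → [0,1]`, then every member of `𝒜` is countable; consequently `𝒜`
contains no uncountable set. -/
theorem stmt16 {Γ : Type*} (𝒜 : Set (Set Γ))
    (hsing : ∀ γ : Γ, {γ} ∈ 𝒜)
    (hsub : ∀ A ∈ 𝒜, ∀ B ⊆ A, B ∈ 𝒜)
    (hfin : ∀ A : Set Γ, (∀ F ⊆ A, F.Finite → F ∈ 𝒜) → A ∈ 𝒜)
    (ρ : (Γ → ℝ) → ℝ)
    (hρ01 : ∀ A ∈ 𝒜, ρ (A.indicator 1) ∈ Icc (0:ℝ) 1)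
    (hmono : ∀ A ∈ 𝒜, ∀ B ∈ 𝒜, B ⊂ A → ρ (B.indicator 1) < ρ (A.indicator 1)) :
    ∀ A ∈ 𝒜, A.Countable := by
  classical
  intro A hA
  rcases isEmpty_or_nonempty Γ with hΓ | hΓ
  · exact A.to_countable
  -- a well-order on Γ
  let r : Γ → Γ → Prop := WellOrderingRel
  have hwo : IsWellOrder Γ r := WellOrderingRel.isWellOrder
  -- initial segments of A
  set S : Γ → Set Γ := fun a => {b ∈ A | r b a} with hS
  have hSsub : ∀ a, S a ⊆ A := fun a b hb => hb.1
  have hSmem : ∀ a, S a ∈ 𝒜 := fun a => hsub A hA _ (hSsub a)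
  have hS'mem : ∀ a ∈ A, S a ∪ {a} ∈ 𝒜 := by
    intro a ha
    refine hsub A hA _ ?_
    rintro b (hb | hb)
    · exact hb.1
    · rw [mem_singleton_iff] at hb; subst hb; exact ha
  set F : Γ → ℝ := fun a => ρ ((S a).indicator 1) with hF
  set G : Γ → ℝ := fun a => ρ ((S a ∪ {a}).indicator 1) with hG
  have hFG : ∀ a ∈ A, F a < G a := by
    intro a ha
    refine hmono _ (hS'mem a ha) _ (hSmem a) ⟨subset_union_left, fun h => ?_⟩
    have : a ∈ S a := h (by simp)
    exact irrefl_of r a this.2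
  have hGF : ∀ a ∈ A, ∀ a' ∈ A, r a a' → G a ≤ F a' := by
    intro a ha a' ha' hr
    have hsubset : S a ∪ {a} ⊆ S a' := by
      rintro b (hb | hb)
      · exact ⟨hb.1, trans_of r hb.2 hr⟩
      · rw [mem_singleton_iff] at hb; subst hb; exact ⟨ha, hr⟩
    rcases lt_or_eq_of_le hsubset with h | h
    · exact (hmono _ (hSmem a') _ (hS'mem a ha) h).le
    · show ρ ((S a ∪ {a}).indicator 1) ≤ ρ ((S a').indicator 1)
      rw [h]
  have hinj : InjOn F A := by
    intro u hu v hv huv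
    by_contra hne
    rcases trichotomous_of r u v with h | h | h
    · exact absurd huv (((hFG u hu).trans_le (hGF u hu v hv h)).ne)
    · exact hne h
    · exact absurd huv.symm (((hFG v hv).trans_le (hGF v hv u hu h)).ne)
  -- the disjoint intervals argument
  have key : ∀ u ∈ A, ∀ v ∈ A, r u v →
      Disjoint (Ioo (F u) (G u)) (Ioo (F v) (G v)) := by
    intro u hu v hv hr
    rw [Set.disjoint_left]
    rintro x ⟨_, hx2⟩ ⟨hx3, _⟩
    exact lt_irrefl x ((hx2.trans_le (hGF u hu v hv hr)).trans hx3)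
  have hdisj : (F '' A).PairwiseDisjoint
      fun x => Ioo x (G (Function.invFunOn F A x)) := by
    rintro _ ⟨u, hu, rfl⟩ _ ⟨v, hv, rfl⟩ hne
    have hu' : Function.invFunOn F A (F u) = u := hinj.leftInvOn_invFunOn hu
    have hv' : Function.invFunOn F A (F v) = v := hinj.leftInvOn_invFunOn hv
    simp only [Function.onFun]
    rw [hu', hv']
    have huvne : u ≠ v := fun h => hne (by rw [h])
    rcases trichotomous_of r u v with h | h | h
    · exact key u hu v hv h
    · exact absurd h huvne
    · exact (key v hv u hu h).symm
  have h' : ∀ x ∈ F '' A, x < G (Function.invFunOn F A x) := by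
    rintro _ ⟨u, hu, rfl⟩
    rw [hinj.leftInvOn_invFunOn hu]
    exact hFG u hu
  have fs_count : (F '' A).Countable := hdisj.countable_of_Ioo h'
  exact MapsTo.countable_of_injOn (mapsTo_image F A) hinj fs_count
end

section
/- Let $K \subseteq \{0,1\}^\Gamma$ be compact in the product topology, closed under pointwise minimum, containing the zero function, and let $\rho : K \to [0,1]$ be a lower semicontinuous function with $\rho(\chi_\varnothing) = 0$ and $\rho(x) \in [\frac{1}{2}, 1]$ for $x \neq \chi_\varnothing$, satisfying property ($*$). Define $M = \{\lambda x : x \in K, \lambda \in [0,2]\} \subseteq [0,2]^\Gamma$ and $\sigma(\lambda x) = \lambda \rho(x)$ for $x \neq \chi_\varnothing$, $\lambda > 0$, with $\sigma(\chi_\varnothing) = 0$. Then $M$ is compact in the product topology, $\sigma$ is well defined and lower semicontinuous on $M$, and $M$ is closed under pointwise minimum. -/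
open Set

/-- The cone `M = {λx : x ∈ K, λ ∈ [0,2]}` over `K ⊆ {0,1}^Γ`. -/
def ConeM {Γ : Type*} (K : Set (Γ → ℝ)) : Set (Γ → ℝ) :=
  {f : Γ → ℝ | ∃ x ∈ K, ∃ l ∈ Icc (0:ℝ) 2, f = l • x}

section Aux

variable {Γ : Type*}

lemma uniq_rep {x y : Γ → ℝ} {l m : ℝ}
    (hx : ∀ γ, x γ = 0 ∨ x γ = 1) (hy : ∀ γ, y γ = 0 ∨ y γ = 1)
    (hx0 : x ≠ 0) (hl : l ≠ 0) (hm : m ≠ 0) (h : l • x = m • y) :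
    l = m ∧ x = y := by
  obtain ⟨γ, hγ⟩ := Function.ne_iff.1 hx0
  have hγ' : x γ ≠ 0 := by simpa using hγ
  have hx1 : x γ = 1 := (hx γ).resolve_left hγ'
  have h1 : l * x γ = m * y γ := by
    have := congrFun h γ
    simpa [Pi.smul_apply, smul_eq_mul] using this
  rw [hx1, mul_one] at h1
  have hy1 : y γ = 1 := by
    rcases hy γ with h2 | h2
    · rw [h2, mul_zero] at h1; exact absurd h1 hl
    · exact h2
  rw [hy1, mul_one] at h1
  refine ⟨h1, ?_⟩
  subst h1
  exact smul_right_injective (Γ → ℝ) hl h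

open Classical in
noncomputable def sigmaFun (K : Set (Γ → ℝ)) (ρ : (Γ → ℝ) → ℝ) (f : Γ → ℝ) : ℝ :=
  if h : ∃ p : ℝ × (Γ → ℝ), p.2 ∈ K ∧ p.2 ≠ 0 ∧ p.1 ≠ 0 ∧ f = p.1 • p.2 then
    h.choose.1 * ρ h.choose.2
  else 0

open Classical in
lemma sigmaFun_zero (K : Set (Γ → ℝ)) (ρ : (Γ → ℝ) → ℝ) : sigmaFun K ρ 0 = 0 := by
  rw [sigmaFun, dif_neg]
  rintro ⟨p, -, hp2, hp1, h0⟩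
  rcases smul_eq_zero.1 h0.symm with h | h
  · exact hp1 h
  · exact hp2 h

open Classical in
lemma sigmaFun_eq {K : Set (Γ → ℝ)} (hK01 : ∀ x ∈ K, ∀ γ, x γ = 0 ∨ x γ = 1)
    {ρ : (Γ → ℝ) → ℝ} (hρ0 : ρ 0 = 0) {x : Γ → ℝ} (hx : x ∈ K) (l : ℝ) :
    sigmaFun K ρ (l • x) = l * ρ x := by
  by_cases hl : l = 0
  · subst hl; simp [sigmaFun_zero]
  by_cases hx0 : x = 0
  · subst hx0; simp [sigmaFun_zero, hρ0]
  have h : ∃ p : ℝ × (Γ → ℝ), p.2 ∈ K ∧ p.2 ≠ 0 ∧ p.1 ≠ 0 ∧ l • x = p.1 • p.2 :=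
    ⟨(l, x), hx, hx0, hl, rfl⟩
  rw [sigmaFun, dif_pos h]
  obtain ⟨hK, h0, h1, heq⟩ := h.choose_spec
  obtain ⟨hlm, hxy⟩ := uniq_rep (hK01 x hx) (hK01 _ hK) hx0 hl h1 heq
  rw [← hlm, ← hxy]

end Aux

/-- Lemma 2.1(III), first step: `M` is compact and closed under pointwise
minimum, and `σ(λx) = λρ(x)` is well defined and lower semicontinuous on `M`. -/
theorem stmt18 {Γ : Type*} (K : Set (Γ → ℝ))
    (hK01 : ∀ x ∈ K, ∀ γ, x γ = 0 ∨ x γ = 1)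
    (hKcomp : IsCompact K)
    (hKinf : ∀ x ∈ K, ∀ y ∈ K, x ⊓ y ∈ K)
    (h0K : (0 : Γ → ℝ) ∈ K)
    (ρ : (Γ → ℝ) → ℝ)
    (hρlsc : LowerSemicontinuousOn ρ K)
    (hρ0 : ρ 0 = 0)
    (hρhalf : ∀ x ∈ K, x ≠ 0 → ρ x ∈ Icc (1/2 : ℝ) 1)
    (hstar : ∀ x ∈ K, ∀ y ∈ K, y < x →
      ∃ α < ρ x, ∃ U : Set (Γ → ℝ), IsOpen U ∧ y ∈ U ∧
        ∀ z ∈ K, z ∈ U → z ≤ x → ρ z < α) :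
    IsCompact (ConeM K) ∧
    (∀ f ∈ ConeM K, ∀ g ∈ ConeM K, f ⊓ g ∈ ConeM K) ∧
    ∃ σ : (Γ → ℝ) → ℝ, σ 0 = 0 ∧
      (∀ x ∈ K, x ≠ 0 → ∀ l ∈ Icc (0:ℝ) 2, l ≠ 0 → σ (l • x) = l * ρ x) ∧
      LowerSemicontinuousOn σ (ConeM K) := by
  have hρnn : ∀ x ∈ K, 0 ≤ ρ x := by
    intro x hx
    by_cases hx0 : x = 0
    · subst hx0; rw [hρ0]
    · have := (hρhalf x hx hx0).1; linarith
  -- M as the image of a compact set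
  have hM : ConeM K = (fun p : ℝ × (Γ → ℝ) => p.1 • p.2) '' (Icc (0:ℝ) 2 ×ˢ K) := by
    ext f
    constructor
    · rintro ⟨x, hx, l, hl, rfl⟩
      exact ⟨(l, x), ⟨hl, hx⟩, rfl⟩
    · rintro ⟨⟨l, x⟩, ⟨hl, hx⟩, rfl⟩
      exact ⟨x, hx, l, hl, rfl⟩
  have hScomp : IsCompact (Icc (0:ℝ) 2 ×ˢ K) := isCompact_Icc.prod hKcomp
  have hMcomp : IsCompact (ConeM K) := by
    rw [hM]
    exact hScomp.image (continuous_fst.smul continuous_snd)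
  refine ⟨hMcomp, ?_, sigmaFun K ρ, sigmaFun_zero K ρ, ?_, ?_⟩
  · -- closure under pointwise minimum
    rintro f ⟨x, hx, l, hl, rfl⟩ g ⟨y, hy, m, hm, rfl⟩
    refine ⟨x ⊓ y, hKinf x hx y hy, min l m,
      ⟨le_min hl.1 hm.1, (min_le_left l m).trans hl.2⟩, ?_⟩
    funext γ
    have hxy : (x ⊓ y) γ = min (x γ) (y γ) := rfl
    have : ((l • x) ⊓ (m • y)) γ = min (l * x γ) (m * y γ) := rfl
    rw [this, Pi.smul_apply, hxy, smul_eq_mul]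
    rcases hK01 x hx γ with h1 | h1 <;> rcases hK01 y hy γ with h2 | h2 <;>
      rw [h1, h2]
    · simp
    · rw [mul_zero, mul_one, min_eq_left hm.1, min_eq_left zero_le_one, mul_zero]
    · rw [mul_zero, mul_one, min_eq_right hl.1, min_eq_right zero_le_one, mul_zero]
    · simp
  · -- well-definedness on nonzero elements
    intro x hx _ l _ _
    exact sigmaFun_eq hK01 hρ0 hx l
  · -- lower semicontinuity
    intro f hf t ht
    set S : Set (ℝ × (Γ → ℝ)) := Icc (0:ℝ) 2 ×ˢ K with hS
    set C : Set (ℝ × (Γ → ℝ)) := {p | p ∈ S ∧ p.1 * ρ p.2 ≤ t} with hC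
    have hCsub : C ⊆ S := fun p hp => hp.1
    have hCclosed : IsClosed C := by
      rw [← isOpen_compl_iff, isOpen_iff_forall_mem_open]
      intro p hp
      by_cases hpS : p ∈ S
      · have hpt : t < p.1 * ρ p.2 := by
          by_contra h
          exact hp ⟨hpS, le_of_not_gt h⟩
        by_cases ht0 : t < 0
        · refine ⟨univ, ?_, isOpen_univ, mem_univ p⟩
          intro q _ hqC
          have : 0 ≤ q.1 * ρ q.2 := mul_nonneg hqC.1.1.1 (hρnn q.2 hqC.1.2)
          linarith [hqC.2]
        · push_neg at ht0
          have hl0 : 0 < p.1 := by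
            rcases lt_or_eq_of_le hpS.1.1 with h | h
            · exact h
            · exfalso; rw [← h, zero_mul] at hpt; linarith
          have hρp : 0 < ρ p.2 := by
            by_contra h
            push_neg at h
            nlinarith
          have htl : t / p.1 < ρ p.2 := (div_lt_iff₀ hl0).2 (by nlinarith)
          set r : ℝ := (t / p.1 + ρ p.2) / 2 with hr
          have hr1 : t / p.1 < r := by
            rw [hr]; linarith
          have hr2 : r < ρ p.2 := by rw [hr]; linarith
          have hr0 : 0 < r := by
            have : 0 ≤ t / p.1 := div_nonneg ht0 hl0.le
            linarith
          obtain ⟨U, hUopen, hpU, hU⟩ := mem_nhdsWithin.1 (hρlsc p.2 hpS.2 r hr2)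
          refine ⟨Ioi (t / r) ×ˢ U, ?_, (isOpen_Ioi).prod hUopen, ?_, hpU⟩
          · rintro ⟨q1, q2⟩ ⟨hq1, hq2⟩ hqC
            simp only [mem_Ioi] at hq1
            have hq2r : r < ρ q2 := hU ⟨hq2, hqC.1.2⟩
            have htr : 0 ≤ t / r := div_nonneg ht0 hr0.le
            have : t / r * r < q1 * ρ q2 := mul_lt_mul'' hq1 hq2r htr hr0.le
            rw [div_mul_cancel₀ t hr0.ne'] at this
            linarith [hqC.2]
          · simp only [mem_Ioi]
            have h' : t < r * p.1 := (div_lt_iff₀ hl0).1 hr1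
            have key : t < p.1 * r := by rw [mul_comm]; exact h'
            exact (div_lt_iff₀ hr0).2 key
      · have hSclosed : IsClosed S := isClosed_Icc.prod hKcomp.isClosed
        exact ⟨Sᶜ, fun q hq hqC => hq (hCsub hqC), hSclosed.isOpen_compl, hpS⟩
    have hCcomp : IsCompact C := hScomp.of_isClosed_subset hCclosed hCsub
    have hDcomp : IsCompact ((fun p : ℝ × (Γ → ℝ) => p.1 • p.2) '' C) :=
      hCcomp.image (continuous_fst.smul continuous_snd)
    have hfD : f ∉ (fun p : ℝ × (Γ → ℝ) => p.1 • p.2) '' C := by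
      rintro ⟨⟨l, x⟩, ⟨⟨hl, hx⟩, hle⟩, rfl⟩
      rw [sigmaFun_eq hK01 hρ0 hx l] at ht
      exact absurd hle (not_le.2 ht)
    have hmem : ((fun p : ℝ × (Γ → ℝ) => p.1 • p.2) '' C)ᶜ ∈ nhds f :=
      hDcomp.isClosed.isOpen_compl.mem_nhds hfD
    filter_upwards [mem_nhdsWithin_of_mem_nhds hmem, self_mem_nhdsWithin] with g hgD hgM
    obtain ⟨x, hx, l, hl, rfl⟩ := hgM
    have hnotC : (l, x) ∉ C := fun hc => hgD ⟨(l, x), hc, rfl⟩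
    have : ¬ l * ρ x ≤ t := fun h => hnotC ⟨⟨hl, hx⟩, h⟩
    rw [sigmaFun_eq hK01 hρ0 hx l]
    linarith
end
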